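/- Consider the dataset in ℝ² with a₁ = (1, −1), y₁ = 1 and a₂ = (−1, −4), y₂ = −1, and the gradient descent iterates θ₀ = 0, θ_{t+1} = θ_t − γ ∇f(θ_t) with step size γ > 0. Then ‖∇f(θ₁)‖ → √2/2 and ‖∇f(θ₂)‖ → 0 as γ → ∞. -/

import Mathlib

noncomputable section

/-- The Euclidean dot product on `ℝ²`. -/
def dot2 (u v : ℝ × ℝ) : ℝ := u.1 * v.1 + u.2 * v.2

/-- The Euclidean norm on `ℝ²`. -/
def enorm2 (u : ℝ × ℝ) : ℝ := Real.sqrt (dot2 u u)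

/-- First sample `a₁ = (1, −1)`, with label `y₁ = 1`. -/
def a1 : ℝ × ℝ := (1, -1)
/-- Second sample `a₂ = (−1, −4)`, with label `y₂ = −1`. -/
def a2 : ℝ × ℝ := (-1, -4)
def y1 : ℝ := 1
def y2 : ℝ := -1

/-- The gradient of the logistic loss for this two-sample dataset. -/
def gradf (θ : ℝ × ℝ) : ℝ × ℝ :=
  -((1 / 2 : ℝ) • ((1 + Real.exp (y1 * dot2 a1 θ))⁻¹ • (y1 • a1)
    + (1 + Real.exp (y2 * dot2 a2 θ))⁻¹ • (y2 • a2)))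

/-- The LR+GD iterates `θ₀ = 0`, `θ_{t+1} = θ_t − γ ∇f(θ_t)`. -/
def gdIter (γ : ℝ) : ℕ → ℝ × ℝ
  | 0 => 0
  | t + 1 => gdIter γ t - γ • gradf (gdIter γ t)

/-! With `w m := (1 + exp m)⁻¹`, the gradient is an affine function of the two sample
weights `w (yᵢ aᵢᵀθ)`, which tend to `0` or `1` when the margins `yᵢ aᵢᵀθ` tend to `±∞`.
Both iterates are `γ` times a convergent direction: `θ₁ = γ (1/2, 3/4)`, with margins `-γ/4` and
`7γ/2`, so `∇f(θ₁) → -(1/2) y₁a₁ = (-1/2, 1/2)`; then `θ₂ = γ ((1/2, 3/4) - ∇f(θ₁))`, whose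
direction tends to `(1, 1/4)`, on which both margins are positive, so both weights vanish. -/

open Filter Topology Real

lemma dot2_smul_right (a θ : ℝ × ℝ) (c : ℝ) : dot2 a (c • θ) = c * dot2 a θ := by
  simp only [dot2, Prod.smul_fst, Prod.smul_snd, smul_eq_mul]
  ring

lemma continuous_dot2_right (a : ℝ × ℝ) : Continuous (dot2 a) := by
  unfold dot2
  fun_prop

lemma continuous_enorm2 : Continuous enorm2 := by
  unfold enorm2 dot2
  fun_prop

lemma tendsto_inv_one_add_exp_atTop :
    Tendsto (fun m : ℝ => (1 + exp m)⁻¹) atTop (𝓝 0) :=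
  (tendsto_atTop_add_const_left _ 1 tendsto_exp_atTop).inv_tendsto_atTop

lemma tendsto_inv_one_add_exp_atBot :
    Tendsto (fun m : ℝ => (1 + exp m)⁻¹) atBot (𝓝 1) := by
  simpa using ((tendsto_const_nhds (x := (1 : ℝ))).add tendsto_exp_atBot).inv₀ (by norm_num)

lemma tendsto_mul_dot2_smul_atTop {y : ℝ} {a d₀ : ℝ × ℝ} {d : ℝ → ℝ × ℝ}
    (hd : Tendsto d atTop (𝓝 d₀)) (hpos : 0 < y * dot2 a d₀) :
    Tendsto (fun γ => y * dot2 a (γ • d γ)) atTop atTop := by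
  have hmargin : Tendsto (fun γ => y * dot2 a (d γ)) atTop (𝓝 (y * dot2 a d₀)) :=
    (((continuous_dot2_right a).tendsto d₀).comp hd).const_mul y
  simp only [dot2_smul_right, mul_left_comm y]
  exact tendsto_id.atTop_mul_pos hpos hmargin

lemma tendsto_gradf {α : Type*} {l : Filter α} {θ : α → ℝ × ℝ} {u v : ℝ}
    (hu : Tendsto (fun x => (1 + exp (y1 * dot2 a1 (θ x)))⁻¹) l (𝓝 u))
    (hv : Tendsto (fun x => (1 + exp (y2 * dot2 a2 (θ x)))⁻¹) l (𝓝 v)) :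
    Tendsto (fun x => gradf (θ x)) l (𝓝 (-((1 / 2 : ℝ) • (u • (y1 • a1) + v • (y2 • a2))))) :=
  (((hu.smul_const _).add (hv.smul_const _)).const_smul _).neg

lemma gdIter_one (γ : ℝ) : gdIter γ 1 = γ • ((1 / 2, 3 / 4) : ℝ × ℝ) := by
  simp only [gdIter, gradf, dot2, a1, a2, y1, y2, Prod.ext_iff]
  norm_num

lemma gdIter_two (γ : ℝ) : gdIter γ 2 = γ • ((1 / 2, 3 / 4) - gradf (gdIter γ 1)) := by
  rw [smul_sub, ← gdIter_one]
  rfl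

lemma tendsto_gradf_gdIter_one :
    Tendsto (fun γ => gradf (gdIter γ 1)) atTop (𝓝 (-1 / 2, 1 / 2)) := by
  have margin1 (γ : ℝ) : y1 * dot2 a1 (gdIter γ 1) = γ * (-1 / 4) := by
    simp only [gdIter_one, Prod.smul_fst, Prod.smul_snd, smul_eq_mul, dot2, a1, y1]
    ring
  have margin2 (γ : ℝ) : y2 * dot2 a2 (gdIter γ 1) = γ * (7 / 2) := by
    simp only [gdIter_one, Prod.smul_fst, Prod.smul_snd, smul_eq_mul, dot2, a2, y2]
    ring
  have weight1 : Tendsto (fun γ => (1 + exp (y1 * dot2 a1 (gdIter γ 1)))⁻¹) atTop (𝓝 1) := by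
    simp only [margin1]
    exact tendsto_inv_one_add_exp_atBot.comp (tendsto_id.atTop_mul_const_of_neg (by norm_num))
  have weight2 : Tendsto (fun γ => (1 + exp (y2 * dot2 a2 (gdIter γ 1)))⁻¹) atTop (𝓝 0) := by
    simp only [margin2]
    exact tendsto_inv_one_add_exp_atTop.comp (tendsto_id.atTop_mul_const (by norm_num))
  convert tendsto_gradf weight1 weight2 using 2
  simp only [a1, a2, y1, y2, Prod.ext_iff]
  norm_num

lemma tendsto_gradf_gdIter_two :
    Tendsto (fun γ => gradf (gdIter γ 2)) atTop (𝓝 0) := by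
  have hd : Tendsto (fun γ => ((1 / 2, 3 / 4) : ℝ × ℝ) - gradf (gdIter γ 1)) atTop
      (𝓝 (1, 1 / 4)) := by
    convert tendsto_const_nhds.sub tendsto_gradf_gdIter_one using 2
    simp only [Prod.ext_iff]
    norm_num
  have h := tendsto_gradf
    (tendsto_inv_one_add_exp_atTop.comp
      (tendsto_mul_dot2_smul_atTop hd (by norm_num [dot2, a1, y1])))
    (tendsto_inv_one_add_exp_atTop.comp
      (tendsto_mul_dot2_smul_atTop hd (by norm_num [dot2, a2, y2])))
  simp only [← gdIter_two] at h
  simpa using h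

/-- For the dataset `a₁ = (1,−1), y₁ = 1`, `a₂ = (−1,−4), y₂ = −1`:
`‖∇f(θ₁)‖ → √2/2` and `‖∇f(θ₂)‖ → 0` as `γ → ∞`. -/
theorem lr_gd_gradient_norms_limits :
    Filter.Tendsto (fun γ : ℝ => enorm2 (gradf (gdIter γ 1))) Filter.atTop
      (nhds (Real.sqrt 2 / 2)) ∧
    Filter.Tendsto (fun γ : ℝ => enorm2 (gradf (gdIter γ 2))) Filter.atTop (nhds 0) := by
  have norm_limit1 : enorm2 (-1 / 2, 1 / 2) = √2 / 2 := by
    rw [enorm2, dot2, show (-1 / 2 : ℝ) * (-1 / 2) + 1 / 2 * (1 / 2) = 2 / 2 ^ 2 by norm_num,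
      sqrt_div' _ (by norm_num), sqrt_sq (by norm_num)]
  have norm_limit2 : enorm2 0 = 0 := by simp [enorm2, dot2]
  constructor
  · rw [← norm_limit1]
    exact (continuous_enorm2.tendsto _).comp tendsto_gradf_gdIter_one
  · rw [← norm_limit2]
    exact (continuous_enorm2.tendsto _).comp tendsto_gradf_gdIter_two

end
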